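/- arXiv:2605.15043 — 2 statements merged into one kernel-verified Lean document; each statement's English description precedes it below -/
import Mathlib

section
/- Let G be an n-vertex (d±d')-nearly-regular γ-expander with d' ≤ d/8, and let S ⊆ V(G) be an α-uniform set of vertices. Then the induced subgraph G₂ = G ∖ S is (d₂ ± d₂')-nearly-regular, where d₂ = d(1 − |S|/n) and d₂' = d'(1 + |S|/n) + α(d + d'). Moreover, if G is a γ-expander, then G₂ is a γ₂-expander with γ₂ = γ − 4(|S|/n + α + d'/d). -/
noncomputable section

/-- The average degree of a graph: `2·e(G) / |V|`. -/
def avgDeg {W : Type*} (G : SimpleGraph W) : ℝ :=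
  2 * (G.edgeSet.ncard : ℝ) / (Nat.card W : ℝ)

/-- The number of edges of `G` crossing the cut `(S, Sᶜ)`, counted as ordered adjacent
pairs `(u, v)` with `u ∈ S`, `v ∉ S` (each cut edge is counted once). -/
def cutCount {W : Type*} (G : SimpleGraph W) (S : Set W) : ℕ :=
  {p : W × W | G.Adj p.1 p.2 ∧ p.1 ∈ S ∧ p.2 ∉ S}.ncard

/-- `G` is a `ρ`-expander: `e(X, V ∖ X) ≥ ρ·d̄(G)·|X|` for all `1 ≤ |X| ≤ (2/3)|V|`. -/
def IsExpander {W : Type*} (G : SimpleGraph W) (ρ : ℝ) : Prop :=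
  ∀ X : Set W, 1 ≤ X.ncard → (X.ncard : ℝ) ≤ 2 / 3 * (Nat.card W : ℝ) →
    ρ * avgDeg G * X.ncard ≤ (cutCount G X : ℝ)

/-- `G` is `(d ± d')`-nearly-regular: every degree lies in `[d − d', d + d']`. -/
def NearlyRegular {W : Type*} (G : SimpleGraph W) (d d' : ℝ) : Prop :=
  ∀ v : W, d - d' ≤ ((G.neighborSet v).ncard : ℝ) ∧ ((G.neighborSet v).ncard : ℝ) ≤ d + d'

/-!
Removing `S` lowers the degree of each remaining vertex by `|N(v) ∩ S|`, which uniformity pins to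
`t·d̄ ± α·d̄` with `t = |S|/n`; since `d̄ ∈ [d - d', d + d']` this gives the new degree window.
For expansion, a set `X` avoiding `S` sends at most `(t + α)·d̄·|X|` of its boundary edges in `G`
into `S`, so its boundary in `G ∖ S` is at least `(γ - t - α)·d̄·|X|`. Comparing `d̄ ≥ d - d'` with
the new average degree `≤ d₂ + d₂'` costs the remaining `3t + 3α + 4d'/d`, using `d' ≤ d/8`.
-/

namespace SimpleGraph

variable {V : Type*} [Fintype V] (G : SimpleGraph V)

theorem sum_ncard_neighborSet : ∑ v, (G.neighborSet v).ncard = 2 * G.edgeSet.ncard := by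
  classical
  simpa [← Set.ncard_coe_finset, ← card_neighborFinset_eq_degree] using
    G.sum_degrees_eq_twice_card_edges

theorem ncard_neighborSet_induce_compl_add (S : Set V) (v : ↥Sᶜ) :
    ((G.induce Sᶜ).neighborSet v).ncard + (G.neighborSet v ∩ S).ncard
      = (G.neighborSet v).ncard := by
  have himage : Subtype.val '' (G.induce Sᶜ).neighborSet v = G.neighborSet v \ S := by
    ext u
    simp only [Set.mem_image, mem_neighborSet, comap_adj, Function.Embedding.subtype_apply,
      Set.mem_sdiff]
    constructor
    · rintro ⟨w, hw, rfl⟩; exact ⟨hw, w.2⟩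
    · rintro ⟨hu, huS⟩; exact ⟨⟨u, huS⟩, hu, rfl⟩
  rw [← Set.ncard_image_of_injective _ Subtype.val_injective, himage, add_comm,
    Set.ncard_inter_add_ncard_sdiff_eq_ncard]

theorem ncard_adj_pairs_le {A B : Set V} {c : ℝ}
    (h : ∀ u ∈ A, ((G.neighborSet u ∩ B).ncard : ℝ) ≤ c) :
    ({p : V × V | G.Adj p.1 p.2 ∧ p.1 ∈ A ∧ p.2 ∈ B}.ncard : ℝ) ≤ A.ncard * c := by
  classical
  rw [Set.ncard_eq_toFinset_card', Finset.card_eq_sum_card_fiberwise (f := Prod.fst)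
    (t := A.toFinset) (fun p hp => by simp_all), Set.ncard_eq_toFinset_card' A]
  push_cast
  refine (Finset.sum_le_card_nsmul _ _ c fun u hu => ?_).trans_eq (nsmul_eq_mul _ _)
  rw [Set.mem_toFinset] at hu
  have hfiber : (↑({p ∈ {p : V × V | G.Adj p.1 p.2 ∧ p.1 ∈ A ∧ p.2 ∈ B}.toFinset | p.1 = u})
      : Set (V × V)) = Prod.mk u '' (G.neighborSet u ∩ B) := by
    ext ⟨x, y⟩
    simp only [Finset.coe_filter, Set.mem_toFinset, Set.mem_ofPred_eq, Set.mem_image,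
      Set.mem_inter_iff, mem_neighborSet, Prod.mk.injEq]
    aesop
  rw [← Set.ncard_coe_finset, hfiber, Set.ncard_image_of_injective _ (Prod.mk_right_injective u)]
  exact h u hu

end SimpleGraph

section AverageDegree

variable {W : Type*} (H : SimpleGraph W)

theorem avgDeg_nonneg : 0 ≤ avgDeg H := by
  unfold avgDeg; positivity

theorem avgDeg_eq_sum_div [Fintype W] :
    avgDeg H = (∑ w, ((H.neighborSet w).ncard : ℝ)) / Fintype.card W := by
  rw [avgDeg, Nat.card_eq_fintype_card, ← Nat.cast_sum, H.sum_ncard_neighborSet]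
  push_cast; rfl

end AverageDegree

namespace NearlyRegular

variable {W : Type*} {H : SimpleGraph W} {d d' : ℝ}

theorem mono {e e' : ℝ} (h : NearlyRegular H d d') (hlo : e - e' ≤ d - d')
    (hhi : d + d' ≤ e + e') : NearlyRegular H e e' := fun v =>
  ⟨hlo.trans (h v).1, (h v).2.trans hhi⟩

variable [Fintype W]

theorem le_avgDeg [Nonempty W] (h : NearlyRegular H d d') : d - d' ≤ avgDeg H := by
  rw [avgDeg_eq_sum_div, le_div_iff₀ (by positivity), mul_comm]
  simpa using Finset.univ.card_nsmul_le_sum _ _ fun v _ => (h v).1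

theorem avgDeg_le (h : NearlyRegular H d d') (hdd' : 0 ≤ d + d') : avgDeg H ≤ d + d' := by
  rw [avgDeg_eq_sum_div]
  refine div_le_of_le_mul₀ (by positivity) hdd' ?_
  simpa [mul_comm, add_mul] using Finset.univ.sum_le_card_nsmul _ _ fun v _ => (h v).2

end NearlyRegular

theorem isExpander_of_nonpos {W : Type*} (H : SimpleGraph W) {ρ : ℝ} (hρ : ρ ≤ 0) :
    IsExpander H ρ := fun X _ _ =>
  (mul_nonpos_of_nonpos_of_nonneg (mul_nonpos_of_nonpos_of_nonneg hρ (avgDeg_nonneg H))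
    X.ncard.cast_nonneg).trans (Nat.cast_nonneg _)

section RemoveSet

variable {V : Type*} [Fintype V] {G : SimpleGraph V} {S : Set V}

theorem cutCount_image_val (X : Set ↥Sᶜ) :
    cutCount G (Subtype.val '' X)
      = {p : V × V | G.Adj p.1 p.2 ∧ p.1 ∈ Subtype.val '' X ∧ p.2 ∈ S}.ncard
        + cutCount (G.induce Sᶜ) X := by
  have hsplit : {p : V × V | G.Adj p.1 p.2 ∧ p.1 ∈ Subtype.val '' X ∧ p.2 ∉ Subtype.val '' X}
      = {p : V × V | G.Adj p.1 p.2 ∧ p.1 ∈ Subtype.val '' X ∧ p.2 ∈ S}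
        ∪ Prod.map Subtype.val Subtype.val ''
          {p : ↥Sᶜ × ↥Sᶜ | (G.induce Sᶜ).Adj p.1 p.2 ∧ p.1 ∈ X ∧ p.2 ∉ X} := by
    ext ⟨u, v⟩
    by_cases hv : v ∈ S <;> simp [hv]
  rw [cutCount, cutCount, hsplit, Set.ncard_union_eq, Set.ncard_image_of_injective _
    (Subtype.val_injective.prodMap Subtype.val_injective)]
  rw [Set.disjoint_right]
  rintro _ ⟨⟨⟨u, hu⟩, ⟨v, hv⟩⟩, -, rfl⟩ ⟨-, -, hvS⟩
  exact hv hvS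

theorem NearlyRegular.induce_compl {d d' a b : ℝ} (hG : NearlyRegular G d d')
    (hS : ∀ v ∉ S, |((G.neighborSet v ∩ S).ncard : ℝ) - a| ≤ b) :
    NearlyRegular (G.induce Sᶜ) (d - a) (d' + b) := by
  intro v
  have hdeg := congrArg (Nat.cast : ℕ → ℝ) (G.ncard_neighborSet_induce_compl_add S v)
  push_cast at hdeg
  have := abs_le.1 (hS v v.2)
  constructor <;> linarith [hG v]

theorem IsExpander.induce_compl {γ β ρ : ℝ} (hG : IsExpander G γ)
    (hβ : ∀ u ∉ S, ((G.neighborSet u ∩ S).ncard : ℝ) ≤ β)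
    (hρ : ρ * avgDeg (G.induce Sᶜ) ≤ γ * avgDeg G - β) : IsExpander (G.induce Sᶜ) ρ := by
  intro X hX1 hX2
  have hcard : (Subtype.val '' X).ncard = X.ncard :=
    Set.ncard_image_of_injective _ Subtype.val_injective
  have hcut := hG (Subtype.val '' X) (hcard ▸ hX1) <| by
    grw [hcard, hX2, Finite.card_subtype_le]
  have hpairs := G.ncard_adj_pairs_le fun u (hu : u ∈ Subtype.val '' X) =>
    hβ u (by obtain ⟨w, -, rfl⟩ := hu; exact w.2)
  rw [cutCount_image_val, hcard] at hcut
  rw [hcard] at hpairs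
  push_cast at hcut
  calc ρ * avgDeg (G.induce Sᶜ) * X.ncard ≤ (γ * avgDeg G - β) * X.ncard := by gcongr
    _ ≤ _ := by linarith

end RemoveSet

theorem expansion_loss_le {d d' t α γ : ℝ} (hd : 0 < d) (hd'0 : 0 ≤ d') (hd' : d' ≤ d / 8)
    (ht0 : 0 ≤ t) (hα : 0 ≤ α) (hγ1 : γ ≤ 1) (hpos : 0 < γ - 4 * (t + α + d' / d)) :
    (γ - 4 * (t + α + d' / d)) * (d * (1 - t) + (d' * (1 + t) + α * (d + d')))
      ≤ (γ - t - α) * (d - d') := by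
  set ε := d' / d
  set ρ := γ - 4 * (t + α + ε)
  have hd'ε : d' = ε * d := (div_mul_cancel₀ d' hd.ne').symm
  have hε0 : 0 ≤ ε := by positivity
  have hε8 : ε ≤ 1 / 8 := by rw [div_le_iff₀ hd]; linarith
  have hρ1 : ρ ≤ 1 := by linarith
  have hγ : γ = ρ + 4 * (t + α + ε) := by ring
  rw [hd'ε, hγ]
  have key : ρ * (1 - t + ε * (1 + t) + α * (1 + ε)) ≤ (ρ + 3 * t + 3 * α + 4 * ε) * (1 - ε) := by
    nlinarith [mul_nonneg (sub_nonneg.2 hρ1) (by positivity : 0 ≤ 2 * ε + ε * t + α + α * ε),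
      mul_nonneg ht0 (sub_nonneg.2 hε8), mul_nonneg hα (sub_nonneg.2 hε8),
      mul_nonneg hε0 (sub_nonneg.2 hε8), mul_nonneg hpos.le ht0]
  nlinarith [mul_le_mul_of_nonneg_left key hd.le]

theorem statement4_general {V : Type*} [Fintype V] (G : SimpleGraph V) (d d' α γ : ℝ)
    (hd : 0 < d) (hd' : d' ≤ d / 8) (hγ1 : γ ≤ 1)
    (hreg : NearlyRegular G d d')
    (S : Set V)
    (hunif : ∀ v : V,
      |((G.neighborSet v ∩ S).ncard : ℝ) - (S.ncard : ℝ) * avgDeg G / (Fintype.card V : ℝ)|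
        ≤ α * avgDeg G)
    (hexp : IsExpander G γ) :
    NearlyRegular (G.induce Sᶜ) (d * (1 - (S.ncard : ℝ) / (Fintype.card V : ℝ)))
        (d' * (1 + (S.ncard : ℝ) / (Fintype.card V : ℝ)) + α * (d + d')) ∧
      IsExpander (G.induce Sᶜ)
        (γ - 4 * ((S.ncard : ℝ) / (Fintype.card V : ℝ) + α + d' / d)) := by
  classical
  cases isEmpty_or_nonempty V
  · exact ⟨fun v => isEmptyElim v.1, fun X hX _ => by simp [Set.eq_empty_of_isEmpty X] at hX⟩
  obtain ⟨v₀⟩ := ‹Nonempty V›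
  set t := (S.ncard : ℝ) / Fintype.card V
  have havg_ge := hreg.le_avgDeg
  have hd'0 : 0 ≤ d' := by linarith [hreg v₀]
  have havg_le := hreg.avgDeg_le (by linarith)
  have hα : 0 ≤ α := nonneg_of_mul_nonneg_left ((abs_nonneg _).trans (hunif v₀)) (by linarith)
  have ht0 : 0 ≤ t := by positivity
  have hunif' : ∀ v, |((G.neighborSet v ∩ S).ncard : ℝ) - t * avgDeg G| ≤ α * avgDeg G := by
    simpa only [t, mul_div_right_comm] using hunif
  have hreg₂ : NearlyRegular (G.induce Sᶜ) (d * (1 - t)) (d' * (1 + t) + α * (d + d')) :=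
    (hreg.induce_compl fun v _ => hunif' v).mono (by nlinarith) (by nlinarith)
  refine ⟨hreg₂, ?_⟩
  rcases le_or_gt (γ - 4 * (t + α + d' / d)) 0 with hneg | hpos
  · exact isExpander_of_nonpos _ hneg
  refine hexp.induce_compl (β := (t + α) * avgDeg G)
    (fun u _ => by linarith [(abs_le.1 (hunif' u)).2]) ?_
  have hγ : 0 ≤ γ - t - α := by nlinarith [div_nonneg hd'0 hd.le]
  calc (γ - 4 * (t + α + d' / d)) * avgDeg (G.induce Sᶜ)
      ≤ (γ - 4 * (t + α + d' / d)) * (d * (1 - t) + (d' * (1 + t) + α * (d + d'))) := by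
        gcongr; exact hreg₂.avgDeg_le (by nlinarith)
    _ ≤ (γ - t - α) * (d - d') := expansion_loss_le hd hd'0 hd' ht0 hα hγ1 hpos
    _ ≤ (γ - t - α) * avgDeg G := by gcongr
    _ = γ * avgDeg G - (t + α) * avgDeg G := by ring

/-- Removing an `α`-uniform set `S` from an `n`-vertex `(d ± d')`-nearly-regular
`γ`-expander `G` (with `d' ≤ d/8`) leaves a `(d₂ ± d₂')`-nearly-regular graph with
`d₂ = d(1 − |S|/n)` and `d₂' = d'(1 + |S|/n) + α(d + d')`; moreover it is a
`γ₂`-expander with `γ₂ = γ − 4(|S|/n + α + d'/d)`. -/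
theorem statement4 {V : Type*} [Fintype V] (G : SimpleGraph V) (d d' α γ : ℝ)
    (hd : 0 < d) (hd' : d' ≤ d / 8) (hγ0 : 0 < γ) (hγ1 : γ ≤ 1)
    (hreg : NearlyRegular G d d')
    (S : Set V)
    (hunif : ∀ v : V,
      |((G.neighborSet v ∩ S).ncard : ℝ) - (S.ncard : ℝ) * avgDeg G / (Fintype.card V : ℝ)|
        ≤ α * avgDeg G)
    (hexp : IsExpander G γ) :
    NearlyRegular (G.induce Sᶜ) (d * (1 - (S.ncard : ℝ) / (Fintype.card V : ℝ)))
        (d' * (1 + (S.ncard : ℝ) / (Fintype.card V : ℝ)) + α * (d + d')) ∧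
      IsExpander (G.induce Sᶜ)
        (γ - 4 * ((S.ncard : ℝ) / (Fintype.card V : ℝ) + α + d' / d)) :=
  statement4_general G d d' α γ hd hd' hγ1 hreg S hunif hexp
end
end

section
/- Let G be an n-vertex (d±d')-nearly-regular γ-expander with d' ≤ d/4. Then G is a (γ', s)-expander with γ' = (2/5)γ and s = γd/4; that is, for every U ⊆ V(G) with 1 ≤ |U| ≤ (2/3)n and every edge set F with |F| ≤ s|U|, the set of vertices outside U having a neighbour in U in G−F has size at least (2/5)γ|U|. -/
/-!
Count the edges leaving `U`. Expansion gives at least `γ(d - d')|U| ≥ (3/4)γd|U|` of them.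
At most `|F| ≤ γd|U|/4` lie in `F`; every other one ends in `N := N_{G-F}(U)`, and each vertex
of `N` receives at most `d + d' ≤ 5d/4` of them. Hence `(5d/4)|N| ≥ γd|U|/2`.
-/

noncomputable section

def extNbhd {W : Type*} (H : SimpleGraph W) (U : Set W) : Set W :=
  {v | v ∉ U ∧ ∃ u ∈ U, H.Adj u v}

section

open Finset

variable {V : Type*} [Fintype V]

lemma le_avgDeg_of_le_ncard_neighborSet [Nonempty V] (G : SimpleGraph V) {δ : ℝ}
    (h : ∀ v, δ ≤ (G.neighborSet v).ncard) : δ ≤ avgDeg G := by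
  classical
  have hdeg (v : V) : (G.neighborSet v).ncard = G.degree v := by
    rw [Set.ncard_eq_toFinset_card', ← G.card_neighborSet_eq_degree, Set.toFinset_card]
  have hsum : ∑ v, (G.degree v : ℝ) = 2 * G.edgeSet.ncard := by
    rw [← G.coe_edgeFinset, Set.ncard_coe_finset]
    exact_mod_cast G.sum_degrees_eq_twice_card_edges
  rw [avgDeg, Nat.card_eq_fintype_card, le_div_iff₀ (by exact_mod_cast Fintype.card_pos),
    ← hsum, mul_comm, ← nsmul_eq_mul, ← Finset.card_univ]
  exact Finset.card_nsmul_le_sum _ _ _ fun v _ ↦ hdeg v ▸ h v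

lemma cutCount_le_cutCount_deleteEdges_add (G : SimpleGraph V) (U : Set V) (F : Set (Sym2 V)) :
    cutCount G U ≤ cutCount (G.deleteEdges F) U + F.ncard := by
  have hsplit : {p : V × V | G.Adj p.1 p.2 ∧ p.1 ∈ U ∧ p.2 ∉ U} ⊆
      {p | (G.deleteEdges F).Adj p.1 p.2 ∧ p.1 ∈ U ∧ p.2 ∉ U} ∪
      {p | p.1 ∈ U ∧ p.2 ∉ U ∧ s(p.1, p.2) ∈ F} := by
    rintro ⟨u, v⟩ ⟨hadj, hu, hv⟩
    by_cases huv : s(u, v) ∈ F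
    · exact Or.inr ⟨hu, hv, huv⟩
    · exact Or.inl ⟨G.deleteEdges_adj.2 ⟨hadj, huv⟩, hu, hv⟩
  have hF : {p : V × V | p.1 ∈ U ∧ p.2 ∉ U ∧ s(p.1, p.2) ∈ F}.ncard ≤ F.ncard := by
    refine Set.ncard_le_ncard_of_injOn (fun p ↦ s(p.1, p.2)) (fun p hp ↦ hp.2.2) ?_ (Set.toFinite F)
    rintro ⟨a, b⟩ ⟨ha, -, -⟩ ⟨c, d⟩ ⟨-, hd, -⟩ h
    rcases Sym2.eq_iff.1 h with ⟨rfl, rfl⟩ | ⟨rfl, rfl⟩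
    · rfl
    · exact absurd ha hd
  exact (Set.ncard_le_ncard hsplit).trans ((Set.ncard_union_le _ _).trans (by
    unfold cutCount; omega))

lemma cutCount_le_mul_ncard_extNbhd (H : SimpleGraph V) (U : Set V) {Δ : ℝ}
    (h : ∀ v, ((H.neighborSet v).ncard : ℝ) ≤ Δ) :
    (cutCount H U : ℝ) ≤ Δ * (extNbhd H U).ncard := by
  classical
  set S := ({p : V × V | H.Adj p.1 p.2 ∧ p.1 ∈ U ∧ p.2 ∉ U} : Set (V × V)).toFinset
  have hmaps : ∀ p ∈ S, p.2 ∈ (extNbhd H U).toFinset := by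
    intro p hp
    simp only [S, Set.mem_toFinset, Set.mem_ofPred_eq] at hp ⊢
    exact ⟨hp.2.2, p.1, hp.2.1, hp.1⟩
  have hfiber : ∀ v ∈ (extNbhd H U).toFinset,
      (#{p ∈ S | p.2 = v} : ℝ) ≤ Δ := by
    intro v _
    refine le_trans ?_ (h v)
    rw [Set.ncard_eq_toFinset_card']
    refine Nat.cast_le.2 (Finset.card_le_card_of_injOn Prod.fst ?_ ?_)
    · intro p hp
      obtain ⟨hpS, rfl⟩ := Finset.mem_filter.1 hp
      simpa [S] using (Set.mem_toFinset.1 hpS).1.symm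
    · rintro ⟨a, b⟩ hp ⟨c, d⟩ hq (rfl : a = c)
      exact Prod.ext rfl ((Finset.mem_filter.1 hp).2.trans (Finset.mem_filter.1 hq).2.symm)
  rw [cutCount, Set.ncard_eq_toFinset_card', Finset.card_eq_sum_card_fiberwise hmaps,
    Set.ncard_eq_toFinset_card', mul_comm, ← nsmul_eq_mul]
  push_cast
  exact Finset.sum_le_card_nsmul _ _ _ hfiber

lemma cutCount_le_ncard_add_mul_ncard_extNbhd (G : SimpleGraph V) (U : Set V)
    (F : Set (Sym2 V)) {Δ : ℝ} (h : ∀ v, ((G.neighborSet v).ncard : ℝ) ≤ Δ) :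
    (cutCount G U : ℝ) ≤ F.ncard + Δ * (extNbhd (G.deleteEdges F) U).ncard := by
  have hdel : ∀ v, (((G.deleteEdges F).neighborSet v).ncard : ℝ) ≤ Δ := fun v ↦
    le_trans (Nat.cast_le.2 (Set.ncard_le_ncard (fun _ hw ↦ G.deleteEdges_le F hw))) (h v)
  have hsplit : (cutCount G U : ℝ) ≤ cutCount (G.deleteEdges F) U + F.ncard := by
    exact_mod_cast cutCount_le_cutCount_deleteEdges_add G U F
  linarith [cutCount_le_mul_ncard_extNbhd (G.deleteEdges F) U hdel]

end

theorem statement11_general {V : Type*} [Fintype V] (G : SimpleGraph V) (d d' γ : ℝ)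
    (hd : 0 < d) (hd' : d' ≤ d / 4) (hγ : 0 ≤ γ)
    (hreg : ∀ v : V, d - d' ≤ ((G.neighborSet v).ncard : ℝ) ∧
      ((G.neighborSet v).ncard : ℝ) ≤ d + d')
    (hexp : IsExpander G γ) :
    ∀ (U : Set V) (F : Set (Sym2 V)), F ⊆ G.edgeSet →
      1 ≤ U.ncard → (U.ncard : ℝ) ≤ 2 / 3 * (Fintype.card V : ℝ) →
      (F.ncard : ℝ) ≤ (γ * d / 4) * U.ncard →
      (2 / 5) * γ * U.ncard ≤ ((extNbhd (G.deleteEdges F) U).ncard : ℝ) := by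
  intro U F _ hU1 hU2 hF
  obtain ⟨u, -⟩ := Set.nonempty_of_ncard_ne_zero (s := U) (by omega)
  have : Nonempty V := ⟨u⟩
  have hlower : γ * (d - d') * U.ncard ≤ cutCount G U := by
    have hcut := hexp U hU1 (by rwa [Nat.card_eq_fintype_card])
    have : γ * (d - d') * U.ncard ≤ γ * avgDeg G * U.ncard := by
      gcongr
      exact le_avgDeg_of_le_ncard_neighborSet G fun v ↦ (hreg v).1
    linarith
  have hupper := cutCount_le_ncard_add_mul_ncard_extNbhd G U F fun v ↦ (hreg v).2
  set N := ((extNbhd (G.deleteEdges F) U).ncard : ℝ)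
  have hU0 : (0 : ℝ) ≤ U.ncard := Nat.cast_nonneg _
  have hN0 : 0 ≤ N := Nat.cast_nonneg _
  have hN : 5 * d / 4 * ((2 / 5) * γ * U.ncard) ≤ 5 * d / 4 * N := by
    nlinarith [mul_nonneg (mul_nonneg hγ hU0) (sub_nonneg.2 hd'), mul_le_mul_of_nonneg_right hd' hN0]
  exact le_of_mul_le_mul_left hN (by positivity)

/-- An `n`-vertex `(d ± d')`-nearly-regular `γ`-expander with `d' ≤ d/4`
is a `((2/5)γ, γd/4)`-expander: for every `U` with `1 ≤ |U| ≤ (2/3)n` and every edge set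
`F` with `|F| ≤ (γd/4)|U|`, the external neighbourhood of `U` in `G − F` has size at
least `(2/5)γ|U|`. -/
theorem statement11 {V : Type*} [Fintype V] (G : SimpleGraph V) (d d' γ : ℝ)
    (hd : 0 < d) (hd'0 : 0 ≤ d') (hd' : d' ≤ d / 4) (hγ : 0 ≤ γ)
    (hreg : ∀ v : V, d - d' ≤ ((G.neighborSet v).ncard : ℝ) ∧
      ((G.neighborSet v).ncard : ℝ) ≤ d + d')
    (hexp : IsExpander G γ) :
    ∀ (U : Set V) (F : Set (Sym2 V)), F ⊆ G.edgeSet →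
      1 ≤ U.ncard → (U.ncard : ℝ) ≤ 2 / 3 * (Fintype.card V : ℝ) →
      (F.ncard : ℝ) ≤ (γ * d / 4) * U.ncard →
      (2 / 5) * γ * U.ncard ≤ ((extNbhd (G.deleteEdges F) U).ncard : ℝ) :=
  statement11_general G d d' γ hd hd' hγ hreg hexp
end
end
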